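/- arXiv:2304.04456 — 6 statements merged into one kernel-verified Lean document; each statement's English description precedes it below -/
import Mathlib

section
/- Let Γ be a countable abelian group acting faithfully and almost minimally on an infinite compact Hausdorff space X. Then for every g ∈ Γ with g ≠ e, the fixed point set Fix_g = {x ∈ X : g·x = x} has empty interior; that is, the action is topologically free. -/
/-- A faithful almost minimal action of a countable abelian group on an infinite
compact Hausdorff space is topologically free: every nontrivial fixed-point set
has empty interior. -/
theorem stmt_2 {Γ X : Type*} [CommGroup Γ] [Countable Γ] [TopologicalSpace X]
    [CompactSpace X] [T2Space X] [Infinite X] [MulAction Γ X]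
    (hcont : ∀ g : Γ, Continuous fun x : X => g • x)
    (hfaithful : ∀ g : Γ, g ≠ 1 → {x : X | g • x = x} ≠ Set.univ)
    (ham : ∀ F : Set X, IsClosed F → (∀ g : Γ, ∀ x ∈ F, g • x ∈ F) →
      F ≠ Set.univ → F.Finite) :
    ∀ g : Γ, g ≠ 1 → interior {x : X | g • x = x} = ∅ := by
  intro g hg
  by_contra hne
  set F := {x : X | g • x = x} with hF
  have hFclosed : IsClosed F := isClosed_eq (hcont g) continuous_id
  have hFinv : ∀ h : Γ, ∀ x ∈ F, h • x ∈ F := by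
    intro h x hx
    simp only [hF, Set.mem_setOf_eq] at hx ⊢
    rw [smul_comm, hx]
  have hIntInv : ∀ h : Γ, ∀ x ∈ interior F, h • x ∈ interior F := by
    intro h x hx
    refine mem_interior.mpr ⟨(fun y => h⁻¹ • y) ⁻¹' (interior F), ?_, ?_, ?_⟩
    · intro y hy
      have h1 := interior_subset hy
      have h2 := hFinv h _ h1
      simpa using h2
    · exact (hcont h⁻¹).isOpen_preimage _ isOpen_interior
    · simpa using hx
  have hne' : (interior F).Nonempty := Set.nonempty_iff_ne_empty.mpr hne
  have hYfin : ((interior F)ᶜ : Set X).Finite := by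
    apply ham _ isOpen_interior.isClosed_compl
    · intro h x hx hmem
      apply hx
      have := hIntInv h⁻¹ _ hmem
      simpa using this
    · intro hu
      obtain ⟨x, hx⟩ := hne'
      exact (hu ▸ Set.mem_univ x : x ∈ ((interior F)ᶜ : Set X)) hx
  have hFfin : F.Finite := ham F hFclosed hFinv (hfaithful g hg)
  have huniv : (Set.univ : Set X).Finite := by
    refine Set.Finite.subset (hFfin.union hYfin) ?_
    intro x _
    by_cases hx : x ∈ F
    · exact Or.inl hx
    · exact Or.inr (fun h => hx (interior_subset h))
  exact Set.infinite_univ huniv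
end

section
/- Let Γ be a countable abelian group acting faithfully and almost minimally on an infinite compact Hausdorff space X. Then the set of points of X with finite Γ-orbit is countable and has empty interior. -/
open MulAction Set

/-- An isolated point with finite orbit leads to a contradiction. -/
theorem aux_isolated {Γ X : Type*} [Group Γ] [TopologicalSpace X]
    [Infinite X] [MulAction Γ X]
    (hcont : ∀ g : Γ, Continuous fun x : X => g • x)
    (ham : ∀ F : Set X, IsClosed F → (∀ g : Γ, ∀ x ∈ F, g • x ∈ F) →
      F ≠ Set.univ → F.Finite)
    (x : X) (hx : IsOpen ({x} : Set X)) (hfin : (orbit Γ x).Finite) : False := by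
  have horb_open : IsOpen (orbit Γ x) := by
    have h1 : orbit Γ x = ⋃ y ∈ orbit Γ x, {y} := by simp
    rw [h1]
    refine isOpen_biUnion ?_
    rintro y ⟨g, rfl⟩
    have h2 : ({g • x} : Set X) = (fun z : X => g⁻¹ • z) ⁻¹' {x} := by
      ext z
      simp only [mem_singleton_iff, mem_preimage, inv_smul_eq_iff]
    rw [h2]
    exact hx.preimage (hcont g⁻¹)
  have hFc : IsClosed (orbit Γ x)ᶜ := horb_open.isClosed_compl
  have hinv : ∀ g : Γ, ∀ y ∈ (orbit Γ x)ᶜ, g • y ∈ (orbit Γ x)ᶜ := by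
    intro g y hy hmem
    rcases hmem with ⟨h, hh⟩
    refine hy ⟨g⁻¹ * h, ?_⟩
    show (g⁻¹ * h) • x = y
    rw [mul_smul, show h • x = g • y from hh, inv_smul_smul]
  have hne : (orbit Γ x)ᶜ ≠ univ := by
    intro h
    have : x ∈ (orbit Γ x)ᶜ := h ▸ mem_univ x
    exact this (mem_orbit_self x)
  have hFfin : ((orbit Γ x)ᶜ).Finite := ham _ hFc hinv hne
  have huniv : (univ : Set X).Finite := by
    refine (hfin.union hFfin).subset ?_
    intro z _
    by_cases h : z ∈ orbit Γ x
    · exact Or.inl h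
    · exact Or.inr h
  exact Set.infinite_univ huniv

/-- The fixed point set of a nontrivial element is finite. -/
theorem aux_fix {Γ X : Type*} [CommGroup Γ] [TopologicalSpace X] [T2Space X]
    [MulAction Γ X]
    (hcont : ∀ g : Γ, Continuous fun x : X => g • x)
    (hfaithful : ∀ g : Γ, g ≠ 1 → {x : X | g • x = x} ≠ Set.univ)
    (ham : ∀ F : Set X, IsClosed F → (∀ g : Γ, ∀ x ∈ F, g • x ∈ F) →
      F ≠ Set.univ → F.Finite)
    (g : Γ) (hg : g ≠ 1) : ({x : X | g • x = x}).Finite := by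
  refine ham _ ?_ ?_ (hfaithful g hg)
  · exact isClosed_eq (hcont g) continuous_id
  · intro h x hx
    show g • (h • x) = h • x
    rw [smul_smul, mul_comm, mul_smul]
    exact congrArg (h • ·) hx

/-- Interior points of finite sets are isolated. -/
theorem aux_isolated_of_finite {X : Type*} [TopologicalSpace X]
    {W : Set X} (hW : IsOpen W) (hWfin : W.Finite) [T1Space X]
    {x : X} (hx : x ∈ W) : IsOpen ({x} : Set X) := by
  have h1 : ({x} : Set X) = W ∩ (W \ {x})ᶜ := by
    ext z
    constructor
    · rintro rfl
      exact ⟨hx, fun h => h.2 rfl⟩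
    · rintro ⟨hzW, hz⟩
      by_contra hne
      exact hz ⟨hzW, hne⟩
  rw [h1]
  exact hW.inter ((hWfin.subset (diff_subset)).isClosed).isOpen_compl

/-- For a faithful almost minimal action of a countable abelian group on an
infinite compact Hausdorff space, the set of points with finite orbit is
countable and has empty interior. -/
theorem stmt_3 {Γ X : Type*} [CommGroup Γ] [Countable Γ] [TopologicalSpace X]
    [CompactSpace X] [T2Space X] [Infinite X] [MulAction Γ X]
    (hcont : ∀ g : Γ, Continuous fun x : X => g • x)
    (hfaithful : ∀ g : Γ, g ≠ 1 → {x : X | g • x = x} ≠ Set.univ)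
    (ham : ∀ F : Set X, IsClosed F → (∀ g : Γ, ∀ x ∈ F, g • x ∈ F) →
      F ≠ Set.univ → F.Finite) :
    Set.Countable {x : X | (MulAction.orbit Γ x).Finite} ∧
      interior {x : X | (MulAction.orbit Γ x).Finite} = ∅ := by
  rcases finite_or_infinite Γ with hΓ | hΓ
  · -- Γ finite: derive a contradiction.
    exfalso
    -- no isolated points
    have hniso : ∀ x : X, ¬ IsOpen ({x} : Set X) := by
      intro x hx
      exact aux_isolated hcont ham x hx (Set.finite_range fun g : Γ => g • x)
    -- open nonempty sets are infinite
    have hopeninf : ∀ V : Set X, IsOpen V → V.Nonempty → V.Infinite := by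
      rintro V hV ⟨y, hy⟩
      by_contra hfin
      have hVfin : V.Finite := Set.not_infinite.mp hfin
      exact hniso y (aux_isolated_of_finite hV hVfin hy)
    obtain ⟨x⟩ : Nonempty X := inferInstance
    have hOfin : (orbit Γ x).Finite := Set.finite_range _
    have hOcl : IsClosed (orbit Γ x) := hOfin.isClosed
    have hcompl : ((orbit Γ x)ᶜ).Infinite := by
      have : ((univ : Set X) \ orbit Γ x).Infinite :=
        Set.infinite_univ.diff hOfin
      rwa [Set.compl_eq_univ_diff]
    obtain ⟨y, hy⟩ := hcompl.nonempty
    -- separate y from the orbit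
    obtain ⟨V, W, hVo, hWo, hyV, hOW, hdisj⟩ :=
      NormalSpace.normal {y} (orbit Γ x) isClosed_singleton hOcl
        (Set.disjoint_singleton_left.mpr hy)
    have hKW : closure V ⊆ Wᶜ :=
      closure_minimal (fun z hz hzW => hdisj.ne_of_mem hz hzW rfl) hWo.isClosed_compl
    have hKO : ∀ z ∈ closure V, z ∉ orbit Γ x := fun z hz hzO => hKW hz (hOW hzO)
    set F : Set X := ⋃ g : Γ, (fun z : X => g⁻¹ • z) ⁻¹' closure V with hF
    have hFcl : IsClosed F :=
      isClosed_iUnion_of_finite fun g => isClosed_closure.preimage (hcont g⁻¹)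
    have hFinv : ∀ g : Γ, ∀ z ∈ F, g • z ∈ F := by
      intro g z hz
      rcases Set.mem_iUnion.mp hz with ⟨h, hh⟩
      refine Set.mem_iUnion.mpr ⟨g * h, ?_⟩
      show (g * h)⁻¹ • (g • z) ∈ closure V
      rwa [mul_inv_rev, mul_smul, inv_smul_smul]
    have hFne : F ≠ univ := by
      intro h
      have hxF : x ∈ F := h ▸ mem_univ x
      rcases Set.mem_iUnion.mp hxF with ⟨g, hg⟩
      exact hKO _ hg ⟨g⁻¹, rfl⟩
    have hFfin : F.Finite := ham F hFcl hFinv hFne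
    have hVsub : V ⊆ F := by
      intro z hz
      refine Set.mem_iUnion.mpr ⟨1, ?_⟩
      show (1 : Γ)⁻¹ • z ∈ closure V
      rw [inv_one, one_smul]
      exact subset_closure hz
    exact hopeninf V hVo ⟨y, hyV rfl⟩ (hFfin.subset hVsub)
  · -- Γ infinite
    have hsub : {x : X | (orbit Γ x).Finite} ⊆
        ⋃ g ∈ {g : Γ | g ≠ 1}, {x : X | g • x = x} := by
      intro x hx
      have hninj : ¬ Function.Injective (fun g : Γ => g • x) := by
        intro hinj
        exact Set.infinite_range_of_injective hinj hx
      rw [Function.not_injective_iff] at hninj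
      obtain ⟨a, b, hab, hne⟩ := hninj
      have hg1 : a⁻¹ * b ∈ {g : Γ | g ≠ 1} := fun h => hne (inv_mul_eq_one.mp h)
      have hgx : (a⁻¹ * b) • x = x := by
        show (a⁻¹ * b) • x = x
        rw [mul_smul, show b • x = a • x from hab.symm, inv_smul_smul]
      exact Set.mem_biUnion hg1 hgx
    have hcnt : Set.Countable {x : X | (orbit Γ x).Finite} := by
      refine Set.Countable.mono hsub ?_
      exact Set.Countable.biUnion (Set.to_countable _)
        (fun g hg => (aux_fix hcont hfaithful ham g hg).countable)
    refine ⟨hcnt, ?_⟩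
    classical
    by_contra hint
    obtain ⟨x₀, hx₀⟩ := Set.nonempty_iff_ne_empty.mpr hint
    set C := {x : X | (orbit Γ x).Finite} with hCdef
    set f : Γ → Set X := fun g =>
      if g = 1 then (interior C)ᶜ else {x : X | g • x = x} with hfdef
    have hfcl : ∀ g, IsClosed (f g) := by
      intro g
      by_cases h : g = 1
      · simp only [hfdef, h, if_pos rfl]
        exact isOpen_interior.isClosed_compl
      · simp only [hfdef, if_neg h]
        exact isClosed_eq (hcont g) continuous_id
    have hfcov : ⋃ g, f g = univ := by
      refine Set.eq_univ_of_forall fun x => ?_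
      by_cases hx : x ∈ interior C
      · have hxC : x ∈ C := interior_subset hx
        rcases Set.mem_iUnion₂.mp (hsub hxC) with ⟨g, hg, hgx⟩
        refine Set.mem_iUnion.mpr ⟨g, ?_⟩
        simp only [hfdef, if_neg hg]
        exact hgx
      · refine Set.mem_iUnion.mpr ⟨1, ?_⟩
        simp only [hfdef, if_pos rfl]
        exact hx
    have hdense : Dense (⋃ g, interior (f g)) :=
      dense_iUnion_interior_of_closed hfcl hfcov
    obtain ⟨x, hxmem, hxU⟩ :=
      hdense.exists_mem_open isOpen_interior ⟨x₀, hx₀⟩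
    rcases Set.mem_iUnion.mp hxmem with ⟨g, hxg⟩
    by_cases hg : g = 1
    · rw [hfdef] at hxg
      simp only [hg, if_pos rfl] at hxg
      exact (interior_subset hxg) hxU
    · have hfg : f g = {x : X | g • x = x} := by simp [hfdef, hg]
      have hWfin : (f g).Finite := hfg ▸ aux_fix hcont hfaithful ham g hg
      have hiso : IsOpen ({x} : Set X) :=
        aux_isolated_of_finite isOpen_interior
          (hWfin.subset interior_subset) hxg
      have hxC : x ∈ C := interior_subset hxU
      exact aux_isolated hcont ham x hiso hxC
end

section
/- Let Γ be a countable abelian group acting topologically freely on a compact Hausdorff space X, and let μ be an ergodic Γ-invariant regular Borel probability measure on X with full support. Then μ is essentially free: μ(Fix_g) = 0 for every g ∈ Γ with g ≠ e. -/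
open MeasureTheory

/-- For a topologically free action of a countable abelian group on a compact
Hausdorff space, any ergodic invariant regular Borel probability measure with
full support is essentially free. -/
theorem stmt_7 {Γ X : Type*} [CommGroup Γ] [Countable Γ] [TopologicalSpace X]
    [CompactSpace X] [T2Space X] [MeasurableSpace X] [BorelSpace X]
    [MulAction Γ X]
    (hcont : ∀ g : Γ, Continuous fun x : X => g • x)
    (htopfree : ∀ g : Γ, g ≠ 1 → interior {x : X | g • x = x} = ∅)
    (μ : Measure X) [IsProbabilityMeasure μ] (hreg : μ.Regular)
    (hinv : ∀ g : Γ, μ.map (fun x : X => g • x) = μ)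
    (herg : ∀ s : Set X, MeasurableSet s →
      (∀ g : Γ, (fun x : X => g • x) ⁻¹' s = s) → μ s = 0 ∨ μ s = 1)
    (hfull : ∀ U : Set X, IsOpen U → U.Nonempty → 0 < μ U) :
    ∀ g : Γ, g ≠ 1 → μ {x : X | g • x = x} = 0 := by
  intro g hg
  set S : Set X := {x : X | g • x = x} with hS
  have hclosed : IsClosed S := isClosed_eq (hcont g) continuous_id
  have hinvS : ∀ h : Γ, (fun x : X => h • x) ⁻¹' S = S := by
    intro h
    ext x
    simp only [Set.mem_preimage, hS, Set.mem_setOf_eq, smul_smul]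
    rw [mul_comm, ← smul_smul]
    exact ⟨fun hx => smul_left_cancel h hx, fun hx => by rw [hx]⟩
  rcases herg S hclosed.measurableSet hinvS with h0 | h1
  · exact h0
  · exfalso
    have hcompl : μ Sᶜ = 0 := by
      rw [measure_compl hclosed.measurableSet (measure_ne_top μ S), h1]
      simp
    have hScU : Sᶜ = ∅ := by
      by_contra hne
      have := hfull Sᶜ hclosed.isOpen_compl (Set.nonempty_iff_ne_empty.mpr hne)
      rw [hcompl] at this
      exact lt_irrefl 0 this
    have hSuniv : S = Set.univ := by
      rw [← Set.compl_empty, ← hScU, compl_compl]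
    have hXne : Nonempty X := by
      by_contra hempty
      have : μ Set.univ = 0 := by
        rw [Set.univ_eq_empty_iff.mpr (not_nonempty_iff.mp hempty)]
        exact measure_empty
      rw [measure_univ] at this
      exact one_ne_zero this
    have := htopfree g hg
    rw [← hS, hSuniv, interior_univ] at this
    exact (Set.univ_nonempty).ne_empty this
end

section
/- Let p, q ≥ 2 be integers, φ_p, φ_q : 𝕋 → 𝕋 be given by φ_p(z) = z^p, φ_q(z) = z^q, and let X = {(x_n)_{n≥0} ∈ 𝕋^ℕ : x_n = x_{n+1}^{pq}} with the ℤ²-action β generated by coordinatewise p-th and q-th power maps (and their inverses via the shift). Then F ↦ π₀(F) is a bijection between closed ℤ²-invariant subsets of X and closed subsets B of 𝕋 satisfying φ_p(B) = φ_q(B) = B, where π₀ is projection onto the 0-th coordinate. -/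
/-- The inverse limit `X = lim← (𝕋, z ↦ z^{pq})`, as a subset of `𝕋^ℕ`
(written additively, `𝕋 = ℝ/ℤ`). -/
def XS (p q : ℕ) : Set (ℕ → AddCircle (1 : ℝ)) :=
  {x | ∀ n, (p * q) • x (n + 1) = x n}

namespace Stmt10Aux

local notation "T" => AddCircle (1 : ℝ)

lemma isClosed_XS (p q : ℕ) : IsClosed (XS p q) := by
  have h : XS p q = ⋂ n, {x : ℕ → T | (p * q) • x (n + 1) = x n} := by
    ext x; simp [XS, Set.mem_iInter]
  rw [h]
  exact isClosed_iInter fun n =>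
    isClosed_eq ((continuous_apply (n + 1)).nsmul _) (continuous_apply n)

/-- coordinates are determined backwards -/
lemma coord_eq {p q : ℕ} {x : ℕ → T} (hx : x ∈ XS p q) (m j : ℕ) :
    x m = ((p * q) ^ j) • x (m + j) := by
  induction j with
  | zero => simp
  | succ j ih =>
    have h := hx (m + j)
    calc x m = (p * q) ^ j • x (m + j) := ih
      _ = (p * q) ^ j • ((p * q) • x (m + j + 1)) := by rw [h]
      _ = ((p * q) ^ j * (p * q)) • x (m + j + 1) := (mul_nsmul' _ _ _).symm
      _ = (p * q) ^ (j + 1) • x (m + (j + 1)) := by rw [pow_succ]; rfl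

lemma g_mem_XS {p q : ℕ} {x : ℕ → T} (hx : x ∈ XS p q) :
    (fun m => (p * q) • x m) ∈ XS p q := fun n => congrArg _ (hx n)

lemma smul_swap (a b : ℕ) (z : T) : a • b • z = b • a • z := by
  rw [← mul_nsmul' z a b, mul_comm, mul_nsmul' z b a]

lemma iterate_coord {p q : ℕ} : ∀ (n : ℕ) (x : ℕ → T), x ∈ XS p q →
    ∀ k, ((fun (y : ℕ → T) m => (p * q) • y m)^[n] x) (k + n) = x k := by
  intro n
  induction n with
  | zero => intro x _ k; simp
  | succ n ih =>
    intro x hx k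
    rw [Function.iterate_succ_apply]
    have h1 := ih _ (g_mem_XS hx) (k + 1)
    have h2 : (k + 1) + n = k + (n + 1) := by ring
    rw [h2] at h1
    rw [h1]
    exact hx k

lemma g_image {p q : ℕ} {F : Set (ℕ → T)}
    (hP : (fun (x : ℕ → T) (n : ℕ) => p • x n) '' F = F)
    (hQ : (fun (x : ℕ → T) (n : ℕ) => q • x n) '' F = F) :
    (fun (x : ℕ → T) (m : ℕ) => (p * q) • x m) '' F = F := by
  have h : (fun (x : ℕ → T) (m : ℕ) => (p * q) • x m) =
      (fun (x : ℕ → T) (m : ℕ) => p • x m) ∘ (fun (x : ℕ → T) (m : ℕ) => q • x m) := by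
    funext x m
    exact mul_nsmul' (x m) p q
  rw [h, Set.image_comp, hQ, hP]

/-- Key structure lemma: a closed invariant `F ⊆ X` is determined by `π₀(F)`. -/
lemma F_eq {p q : ℕ} {F : Set (ℕ → T)} (hX : F ⊆ XS p q) (hC : IsClosed F)
    (hP : (fun (x : ℕ → T) (n : ℕ) => p • x n) '' F = F)
    (hQ : (fun (x : ℕ → T) (n : ℕ) => q • x n) '' F = F) :
    F = {x | x ∈ XS p q ∧ ∀ n, x n ∈ (fun x : ℕ → T => x 0) '' F} := by
  have hg := g_image hP hQ
  have hgiter : ∀ n, (fun (x : ℕ → T) (m : ℕ) => (p * q) • x m)^[n] '' F = F := by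
    intro n
    induction n with
    | zero => simp
    | succ n ih => rw [Function.iterate_succ', Set.image_comp, ih, hg]
  ext x
  constructor
  · intro hxF
    refine ⟨hX hxF, fun n => ?_⟩
    have hx' : x ∈ (fun (x : ℕ → T) (m : ℕ) => (p * q) • x m)^[n] '' F := by
      rw [hgiter n]; exact hxF
    obtain ⟨y, hyF, hyx⟩ := hx'
    refine ⟨y, hyF, ?_⟩
    have h := iterate_coord n y (hX hyF) 0
    rw [hyx] at h
    rw [zero_add] at h
    exact h.symm
  · rintro ⟨hxX, hB⟩
    -- choose approximating points
    have hchoice : ∀ n : ℕ, ∃ y, y ∈ F ∧ y 0 = x n := fun n => by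
      obtain ⟨y, hy, hy0⟩ := hB n; exact ⟨y, hy, hy0⟩
    choose y hyF hy0 using hchoice
    set g := fun (w : ℕ → T) (m : ℕ) => (p * q) • w m with hgdef
    set z := fun n => g^[n] (y n) with hzdef
    have hzF : ∀ n, z n ∈ F := fun n => by
      have : z n ∈ g^[n] '' F := ⟨y n, hyF n, rfl⟩
      rwa [hgiter n] at this
    have hzn : ∀ n, z n n = x n := by
      intro n
      have h := iterate_coord n (y n) (hX (hyF n)) 0
      rw [zero_add] at h
      rw [hzdef]
      simp only []
      rw [h, hy0]
    have hzm : ∀ m n, m ≤ n → z n m = x m := by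
      intro m n hmn
      have h1 := coord_eq (hX (hzF n)) m (n - m)
      have h2 := coord_eq hxX m (n - m)
      have h3 : m + (n - m) = n := by omega
      rw [h3] at h1 h2
      rw [h1, h2, hzn n]
    have htend : Filter.Tendsto z Filter.atTop (nhds x) := by
      rw [tendsto_pi_nhds]
      intro m
      apply Filter.Tendsto.congr' _ (tendsto_const_nhds (x := x m))
      filter_upwards [Filter.eventually_ge_atTop m] with n hn
      exact (hzm m n hn).symm
    exact hC.mem_of_tendsto htend (Filter.Eventually.of_forall hzF)

end Stmt10Aux

open Stmt10Aux in
/-- `F ↦ π₀(F)` is a bijection between the closed `ℤ²`-invariant subsets of the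
inverse limit `X = lim← (𝕋, z ↦ z^{pq})` (invariance being expressed by
invariance under the coordinatewise `p`-th and `q`-th power automorphisms) and
the closed subsets `B ⊆ 𝕋` with `φ_p(B) = φ_q(B) = B`. -/
theorem stmt_10 (p q : ℕ) (hp : 2 ≤ p) (hq : 2 ≤ q) :
    Set.BijOn (fun F : Set (ℕ → AddCircle (1 : ℝ)) => (fun x => x 0) '' F)
      {F | F ⊆ XS p q ∧ IsClosed F ∧
        (fun (x : ℕ → AddCircle (1 : ℝ)) (n : ℕ) => p • x n) '' F = F ∧
        (fun (x : ℕ → AddCircle (1 : ℝ)) (n : ℕ) => q • x n) '' F = F}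
      {B : Set (AddCircle (1 : ℝ)) | IsClosed B ∧
        (fun z => p • z) '' B = B ∧ (fun z => q • z) '' B = B} := by
  constructor
  · -- MapsTo
    rintro F ⟨hX, hC, hP, hQ⟩
    refine ⟨?_, ?_, ?_⟩
    · -- image is closed (compactness)
      have hcomp : IsCompact F := hC.isCompact
      exact (hcomp.image (continuous_apply 0)).isClosed
    · -- p-invariance
      show (fun z => p • z) '' ((fun x : ℕ → AddCircle (1 : ℝ) => x 0) '' F) =
        (fun x : ℕ → AddCircle (1 : ℝ) => x 0) '' F
      conv_rhs => rw [← hP]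
      rw [Set.image_image, Set.image_image]
    · show (fun z => q • z) '' ((fun x : ℕ → AddCircle (1 : ℝ) => x 0) '' F) =
        (fun x : ℕ → AddCircle (1 : ℝ) => x 0) '' F
      conv_rhs => rw [← hQ]
      rw [Set.image_image, Set.image_image]
  constructor
  · -- InjOn
    rintro F₁ ⟨hX₁, hC₁, hP₁, hQ₁⟩ F₂ ⟨hX₂, hC₂, hP₂, hQ₂⟩ h0
    rw [F_eq hX₁ hC₁ hP₁ hQ₁, F_eq hX₂ hC₂ hP₂ hQ₂]
    simp only [Set.mem_setOf_eq] at h0 ⊢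
    rw [h0]
  · -- SurjOn
    rintro B ⟨hBc, hpB, hqB⟩
    set FB : Set (ℕ → AddCircle (1 : ℝ)) := XS p q ∩ {x | ∀ n, x n ∈ B} with hFBdef
    have hpqB : (fun z : AddCircle (1 : ℝ) => (p * q) • z) '' B = B := by
      have h : (fun z : AddCircle (1 : ℝ) => (p * q) • z) =
          (fun z : AddCircle (1 : ℝ) => p • z) ∘ (fun z : AddCircle (1 : ℝ) => q • z) := by
        funext z; exact mul_nsmul' z p q
      rw [h, Set.image_comp, hqB, hpB]
    have hFBX : FB ⊆ XS p q := Set.inter_subset_left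
    have hFBc : IsClosed FB := by
      refine (isClosed_XS p q).inter ?_
      have h : {x : ℕ → AddCircle (1 : ℝ) | ∀ n, x n ∈ B} = ⋂ n, (fun x => x n) ⁻¹' B := by
        ext x; simp
      rw [h]
      exact isClosed_iInter fun n => hBc.preimage (continuous_apply n)
    have hFBP : (fun (x : ℕ → AddCircle (1 : ℝ)) (n : ℕ) => p • x n) '' FB = FB := by
      apply Set.Subset.antisymm
      · rintro _ ⟨x, ⟨hxX, hxB⟩, rfl⟩
        constructor
        · intro n
          show (p * q) • p • x (n + 1) = p • x n
          rw [smul_swap, hxX n]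
        · intro n
          rw [← hpB]
          exact ⟨x n, hxB n, rfl⟩
      · rintro x ⟨hxX, hxB⟩
        refine ⟨fun n => q • x (n + 1), ⟨?_, ?_⟩, ?_⟩
        · intro n
          show (p * q) • q • x (n + 2) = q • x (n + 1)
          rw [smul_swap, hxX (n + 1)]
        · intro n
          rw [← hqB]
          exact ⟨x (n + 1), hxB (n + 1), rfl⟩
        · funext n
          show p • q • x (n + 1) = x n
          rw [← mul_nsmul' (x (n+1)) p q]
          exact hxX n
    have hFBQ : (fun (x : ℕ → AddCircle (1 : ℝ)) (n : ℕ) => q • x n) '' FB = FB := by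
      apply Set.Subset.antisymm
      · rintro _ ⟨x, ⟨hxX, hxB⟩, rfl⟩
        constructor
        · intro n
          show (p * q) • q • x (n + 1) = q • x n
          rw [smul_swap, hxX n]
        · intro n
          rw [← hqB]
          exact ⟨x n, hxB n, rfl⟩
      · rintro x ⟨hxX, hxB⟩
        refine ⟨fun n => p • x (n + 1), ⟨?_, ?_⟩, ?_⟩
        · intro n
          show (p * q) • p • x (n + 2) = p • x (n + 1)
          rw [smul_swap, hxX (n + 1)]
        · intro n
          rw [← hpB]
          exact ⟨x (n + 1), hxB (n + 1), rfl⟩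
        · funext n
          show q • p • x (n + 1) = x n
          rw [← mul_nsmul' (x (n+1)) q p, mul_comm q p]
          exact hxX n
    have himg : (fun x : ℕ → AddCircle (1 : ℝ) => x 0) '' FB = B := by
      apply Set.Subset.antisymm
      · rintro _ ⟨x, ⟨_, hxB⟩, rfl⟩
        exact hxB 0
      · intro b hb
        -- build a backwards orbit inside B
        have hstep : ∀ c : {z : AddCircle (1 : ℝ) // z ∈ B},
            ∃ d : {z : AddCircle (1 : ℝ) // z ∈ B}, (p * q) • (d : AddCircle (1 : ℝ)) = c := by
          rintro ⟨c, hc⟩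
          rw [← hpqB] at hc
          obtain ⟨d, hd, hdc⟩ := hc
          exact ⟨⟨d, hd⟩, hdc⟩
        choose f hf using hstep
        set x : ℕ → AddCircle (1 : ℝ) := fun n => (f^[n] ⟨b, hb⟩ : {z // z ∈ B}) with hxdef
        have hxX : x ∈ XS p q := by
          intro n
          show (p * q) • ((f^[n + 1] ⟨b, hb⟩ : {z // z ∈ B}) : AddCircle (1 : ℝ)) = _
          rw [Function.iterate_succ_apply']
          exact hf _
        refine ⟨x, ⟨hxX, fun n => (f^[n] ⟨b, hb⟩).2⟩, ?_⟩
        show ((f^[0] ⟨b, hb⟩ : {z // z ∈ B}) : AddCircle (1 : ℝ)) = b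
        rfl
    exact ⟨FB, ⟨hFBX, hFBc, hFBP, hFBQ⟩, himg⟩
end

section
/- Let p, q ≥ 2 be multiplicatively independent integers (p^r ≠ q^s for all positive integers r, s). Then the group ℤ[1/pq] ⋊ ℤ², where ℤ² acts on ℤ[1/pq] by (n,m)·x = p^n q^m x, is icc: every element other than the identity has infinite conjugacy class. -/
/-!
Let `g = (x, t) ≠ 1`. If `t = 1` then `x ≠ 0`, and conjugating by `(n, 0) ∈ ℤ²` yields the
pairwise distinct elements `(pⁿ x, 1)`. Otherwise `t` acts by a scaling `λ = p^m q^n`, which is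
`≠ 1` by multiplicative independence, and conjugating by `b ∈ ℤ ⊆ ℤ[1/pq]` yields the pairwise
distinct elements `(x + (1 - λ) b, t)`.
-/

/-- The additive group `ℤ[1/N] = {x ∈ ℚ : x·N^k ∈ ℤ for some k}`. -/
def Zr (N : ℕ) : AddSubgroup ℚ where
  carrier := {x : ℚ | ∃ a : ℤ, ∃ k : ℕ, x * (N : ℚ) ^ k = (a : ℚ)}
  zero_mem' := ⟨0, 0, by norm_num⟩
  add_mem' := by
    rintro x y ⟨a, k, ha⟩ ⟨b, l, hb⟩
    exact ⟨a * (N : ℤ) ^ l + b * (N : ℤ) ^ k, k + l, by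
      push_cast
      rw [pow_add]
      linear_combination ((N : ℚ) ^ l) * ha + ((N : ℚ) ^ k) * hb⟩
  neg_mem' := by
    rintro x ⟨a, k, ha⟩
    exact ⟨-a, k, by push_cast; linear_combination -ha⟩

theorem one_mem_Zr (N : ℕ) : (1 : ℚ) ∈ Zr N := ⟨1, 0, by norm_num⟩

theorem mem_Zr_smul (p q : ℕ) (hp : 2 ≤ p) (hq : 2 ≤ q) (m n : ℤ) {x : ℚ}
    (hx : x ∈ Zr (p * q)) : (p : ℚ) ^ m * (q : ℚ) ^ n * x ∈ Zr (p * q) := by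
  have hp0 : (p : ℚ) ≠ 0 := Nat.cast_ne_zero.mpr (by omega)
  have hq0 : (q : ℚ) ≠ 0 := Nat.cast_ne_zero.mpr (by omega)
  obtain ⟨a, k, ha⟩ := hx
  set j : ℕ := m.natAbs + n.natAbs with hj
  have hm : ((m + j).toNat : ℤ) = m + j := by omega
  have hn : ((n + j).toNat : ℤ) = n + j := by omega
  refine ⟨(p : ℤ) ^ (m + j).toNat * (q : ℤ) ^ (n + j).toNat * a, k + j, ?_⟩
  have e1 : ((p : ℚ)) ^ ((m + (j : ℤ)).toNat) = (p : ℚ) ^ (m + (j : ℤ)) := by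
    rw [← zpow_natCast, hm]
  have e2 : ((q : ℚ)) ^ ((n + (j : ℤ)).toNat) = (q : ℚ) ^ (n + (j : ℤ)) := by
    rw [← zpow_natCast, hn]
  push_cast
  rw [e1, e2, zpow_add₀ hp0, zpow_add₀ hq0, zpow_natCast, zpow_natCast, pow_add]
  push_cast at ha ⊢
  linear_combination ((p : ℚ) ^ m * (q : ℚ) ^ n * ((p : ℚ) * (q : ℚ)) ^ j) * ha

/-- Multiplication by `p^m q^n` as an automorphism of `ℤ[1/pq]`. -/
noncomputable def scaleEquiv (p q : ℕ) (hp : 2 ≤ p) (hq : 2 ≤ q) (m n : ℤ) :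
    Zr (p * q) ≃+ Zr (p * q) where
  toFun x := ⟨(p : ℚ) ^ m * (q : ℚ) ^ n * x, mem_Zr_smul p q hp hq m n x.2⟩
  invFun x := ⟨(p : ℚ) ^ (-m) * (q : ℚ) ^ (-n) * x,
    mem_Zr_smul p q hp hq (-m) (-n) x.2⟩
  left_inv x := by
    have hp0 : (p : ℚ) ≠ 0 := Nat.cast_ne_zero.mpr (by omega)
    have hq0 : (q : ℚ) ≠ 0 := Nat.cast_ne_zero.mpr (by omega)
    ext
    show (p : ℚ) ^ (-m) * (q : ℚ) ^ (-n) * ((p : ℚ) ^ m * (q : ℚ) ^ n * x) = x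
    rw [zpow_neg, zpow_neg]
    field_simp
  right_inv x := by
    have hp0 : (p : ℚ) ≠ 0 := Nat.cast_ne_zero.mpr (by omega)
    have hq0 : (q : ℚ) ≠ 0 := Nat.cast_ne_zero.mpr (by omega)
    ext
    show (p : ℚ) ^ m * (q : ℚ) ^ n * ((p : ℚ) ^ (-m) * (q : ℚ) ^ (-n) * x) = x
    rw [zpow_neg, zpow_neg]
    field_simp
  map_add' x y := by
    ext
    show (p : ℚ) ^ m * (q : ℚ) ^ n * ((x : ℚ) + y) = _
    push_cast
    ring

/-- The action of `ℤ²` on `ℤ[1/pq]` by multiplication by `p^m q^n`, as a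
homomorphism into the automorphism group. -/
noncomputable def scaleHom (p q : ℕ) (hp : 2 ≤ p) (hq : 2 ≤ q) :
    Multiplicative (ℤ × ℤ) →*
      MulAut (Multiplicative (Zr (p * q))) :=
  MonoidHom.mk'
    (fun g => AddEquiv.toMultiplicative
      (scaleEquiv p q hp hq g.toAdd.1 g.toAdd.2))
    (by
      have hp0 : (p : ℚ) ≠ 0 := Nat.cast_ne_zero.mpr (by omega)
      have hq0 : (q : ℚ) ≠ 0 := Nat.cast_ne_zero.mpr (by omega)
      intro a b
      ext x
      show ((p:ℚ) ^ (a.toAdd.1 + b.toAdd.1) * (q:ℚ) ^ (a.toAdd.2 + b.toAdd.2)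
        * ((x.toAdd : ℚ)) : ℚ) = (p:ℚ) ^ a.toAdd.1 * (q:ℚ) ^ a.toAdd.2 *
          ((p:ℚ) ^ b.toAdd.1 * (q:ℚ) ^ b.toAdd.2 * (x.toAdd : ℚ))
      rw [zpow_add₀ hp0, zpow_add₀ hq0]
      ring)

/-- The action of `ℤ` on `ℤ[1/pq]` by multiplication by `(pq)^z`. -/
noncomputable def etaHom (p q : ℕ) (hp : 2 ≤ p) (hq : 2 ≤ q) :
    Multiplicative ℤ →* MulAut (Multiplicative (Zr (p * q))) :=
  (scaleHom p q hp hq).comp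
    (MonoidHom.mk' (fun z => Multiplicative.ofAdd (z.toAdd, z.toAdd))
      (fun _ _ => rfl))

open SemidirectProduct

section MultiplicativeIndependence

variable {p q : ℕ} (hp : 1 < p) (hq : 1 < q)
  (hind : ∀ r s : ℕ, 0 < r → 0 < s → p ^ r ≠ q ^ s)
include hp hq hind

lemma eq_zero_of_natCast_zpow_eq_of_nonneg {m n : ℤ} (hm : 0 ≤ m)
    (h : (p : ℚ) ^ m = (q : ℚ) ^ n) : m = 0 ∧ n = 0 := by
  have hp1 : (1 : ℚ) < p := by exact_mod_cast hp
  have hq1 : (1 : ℚ) < q := by exact_mod_cast hq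
  rcases hm.eq_or_lt with rfl | hm
  · rw [zpow_zero, eq_comm, zpow_eq_one_iff_right₀ (by positivity) hq1.ne'] at h
    exact ⟨rfl, h⟩
  · have hn : 0 < n := by
      rwa [← one_lt_zpow_iff_right₀ hq1, ← h, one_lt_zpow_iff_right₀ hp1]
    lift m to ℕ using hm.le
    lift n to ℕ using hn.le
    exact absurd (by exact_mod_cast h) (hind m n (by omega) (by omega))

lemma eq_zero_of_natCast_zpow_eq {m n : ℤ} (h : (p : ℚ) ^ m = (q : ℚ) ^ n) :
    m = 0 ∧ n = 0 := by
  rcases le_total 0 m with hm | hm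
  · exact eq_zero_of_natCast_zpow_eq_of_nonneg hp hq hind hm h
  · have h' : (p : ℚ) ^ (-m) = (q : ℚ) ^ (-n) := by rw [zpow_neg, zpow_neg, h]
    have := eq_zero_of_natCast_zpow_eq_of_nonneg hp hq hind (neg_nonneg.mpr hm) h'
    omega

lemma natCast_zpow_mul_natCast_zpow_ne_one {m n : ℤ} (hmn : (m, n) ≠ 0) :
    (p : ℚ) ^ m * (q : ℚ) ^ n ≠ 1 := by
  intro h
  have hq0 : (q : ℚ) ≠ 0 := by positivity
  rw [mul_eq_one_iff_eq_inv₀ (zpow_ne_zero n hq0), ← zpow_neg] at h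
  have := eq_zero_of_natCast_zpow_eq hp hq hind h
  exact hmn (Prod.ext this.1 (neg_eq_zero.mp this.2))

end MultiplicativeIndependence

lemma setOf_isConj_infinite_of_injective {G ι : Type*} [Group G] [Infinite ι] (g : G)
    {c : ι → G} (hc : Function.Injective fun i => c i * g * (c i)⁻¹) :
    {h | IsConj g h}.Infinite :=
  Set.infinite_of_injective_forall_mem hc fun i => isConj_iff.mpr ⟨c i, rfl⟩

namespace SemidirectProduct

variable {N G : Type*} [Group N] [Group G] {φ : G →* MulAut N}

@[simp]
lemma left_inl_mul_mul_inl_inv (b : N) (g : N ⋊[φ] G) :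
    (inl b * g * (inl b)⁻¹).left = b * g.left * φ g.right b⁻¹ := by
  simp

@[simp]
lemma left_inr_mul_mul_inr_inv (h : G) (g : N ⋊[φ] G) :
    (inr h * g * (inr h)⁻¹).left = φ h g.left := by
  simp

end SemidirectProduct

section Conjugacy

variable {p q : ℕ} (hp : 2 ≤ p) (hq : 2 ≤ q)

@[simp]
lemma coe_scaleHom_apply (s : Multiplicative (ℤ × ℤ)) (x : Multiplicative (Zr (p * q))) :
    ((scaleHom p q hp hq s x).toAdd : ℚ) = (p : ℚ) ^ s.toAdd.1 * (q : ℚ) ^ s.toAdd.2 * x.toAdd :=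
  rfl

lemma intCast_mem_Zr (N : ℕ) (n : ℤ) : (n : ℚ) ∈ Zr N := ⟨n, 0, by simp⟩

lemma setOf_isConj_infinite_of_right_eq_one
    {g : Multiplicative (Zr (p * q)) ⋊[scaleHom p q hp hq] Multiplicative (ℤ × ℤ)}
    (hg : g ≠ 1) (hright : g.right = 1) : {h | IsConj g h}.Infinite := by
  have hleft : (g.left.toAdd : ℚ) ≠ 0 := fun h0 =>
    hg (SemidirectProduct.ext (toAdd_eq_zero.mp (Subtype.ext h0)) hright)
  refine setOf_isConj_infinite_of_injective g
    (c := fun n : ℤ => inr (Multiplicative.ofAdd (n, 0))) fun n m hnm => ?_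
  have hval := congrArg (fun k => (k.left.toAdd : ℚ)) hnm
  simp only [left_inr_mul_mul_inr_inv, coe_scaleHom_apply, toAdd_ofAdd, zpow_zero,
    mul_one] at hval
  have hp1 : (p : ℚ) ≠ 1 := by exact_mod_cast (by omega : p ≠ 1)
  exact (zpow_right_inj₀ (by positivity) hp1).mp (mul_right_cancel₀ hleft hval)

lemma setOf_isConj_infinite_of_right_ne_one
    (hind : ∀ r s : ℕ, 0 < r → 0 < s → p ^ r ≠ q ^ s)
    {g : Multiplicative (Zr (p * q)) ⋊[scaleHom p q hp hq] Multiplicative (ℤ × ℤ)}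
    (hright : g.right ≠ 1) : {h | IsConj g h}.Infinite := by
  have hscale := natCast_zpow_mul_natCast_zpow_ne_one hp hq hind
    (m := g.right.toAdd.1) (n := g.right.toAdd.2) (toAdd_eq_zero.not.mpr hright)
  refine setOf_isConj_infinite_of_injective g
    (c := fun n : ℤ => inl (Multiplicative.ofAdd ⟨n, intCast_mem_Zr _ n⟩)) fun n m hnm => ?_
  have hval := congrArg (fun k => (k.left.toAdd : ℚ)) hnm
  simp only [left_inl_mul_mul_inl_inv, toAdd_mul, AddSubgroup.coe_add, coe_scaleHom_apply,
    toAdd_inv, AddSubgroup.coe_neg, toAdd_ofAdd] at hval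
  have hsub : (1 - (p : ℚ) ^ g.right.toAdd.1 * (q : ℚ) ^ g.right.toAdd.2) * n =
      (1 - (p : ℚ) ^ g.right.toAdd.1 * (q : ℚ) ^ g.right.toAdd.2) * m := by
    linear_combination hval
  exact_mod_cast mul_left_cancel₀ (sub_ne_zero.mpr hscale.symm) hsub

end Conjugacy

/-- For multiplicatively independent integers `p, q ≥ 2`, the group
`ℤ[1/pq] ⋊ ℤ²` (with `(m,n)` acting by multiplication by `p^m q^n`) is icc:
every non-identity element has infinite conjugacy class. -/
theorem stmt_14 (p q : ℕ) (hp : 2 ≤ p) (hq : 2 ≤ q)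
    (hind : ∀ r s : ℕ, 0 < r → 0 < s → p ^ r ≠ q ^ s) :
    ∀ g : Multiplicative (Zr (p * q)) ⋊[scaleHom p q hp hq]
        Multiplicative (ℤ × ℤ),
      g ≠ 1 → {h | IsConj g h}.Infinite := by
  intro g hg
  by_cases hright : g.right = 1
  · exact setOf_isConj_infinite_of_right_eq_one hp hq hg hright
  · exact setOf_isConj_infinite_of_right_ne_one hp hq hind hright
end

section
/- Let p, q ≥ 2 be integers. The map ℤ[1/pq] ⋊_α ℤ² → (ℤ[1/pq] ⋊_η ℤ) ⋊_γ ℤ given by (x, m, n) ↦ ((x, n), m − n) is a group isomorphism, where α is the ℤ²-action by (m,n)·x = p^m q^n x, η is the ℤ-action by multiplication by pq, and γ is the ℤ-action on ℤ[1/pq] ⋊_η ℤ given by γ_k(x, z) = (p^k x, z). -/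
open SemidirectProduct Multiplicative

namespace SemidirectProduct

variable {N G H K : Type*} [Group N] [Group G] [Group H] [Group K]
  (φ : G →* MulAut N) (ψ : H →* MulAut N) (hψφ : ∀ h g, Commute (ψ h) (φ g))

def actOnLeft : H →* MulAut (N ⋊[φ] G) :=
  MonoidHom.mk' (fun h => congr (ψ h) (MulEquiv.refl G) (hψφ h)) fun h₁ h₂ => by
    ext x <;> simp [congr]

@[simp]
theorem actOnLeft_apply_left (h : H) (x : N ⋊[φ] G) :
    (actOnLeft φ ψ hψφ h x).left = ψ h x.left := rfl

@[simp]
theorem actOnLeft_apply_right (h : H) (x : N ⋊[φ] G) :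
    (actOnLeft φ ψ hψφ h x).right = x.right := rfl

def equivActOnLeft (χ : K →* MulAut N) (e : K ≃* H × G)
    (hχ : ∀ k, χ k = φ (e k).2 * ψ (e k).1) :
    N ⋊[χ] K ≃* (N ⋊[φ] G) ⋊[actOnLeft φ ψ hψφ] H where
  toFun x := ⟨⟨x.left, (e x.right).2⟩, (e x.right).1⟩
  invFun y := ⟨y.left.left, e.symm (y.right, y.left.right)⟩
  left_inv x := by ext <;> simp
  right_inv y := by ext <;> simp
  map_mul' x y := by ext <;> simp [hχ]

end SemidirectProduct

section BaumslagSolitar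

variable (p q : ℕ) (hp : 2 ≤ p) (hq : 2 ≤ q)

theorem coe_toAdd_scaleHom_apply (g : Multiplicative (ℤ × ℤ))
    (x : Multiplicative (Zr (p * q))) :
    ((toAdd (scaleHom p q hp hq g x) : Zr (p * q)) : ℚ) =
      (p : ℚ) ^ (toAdd g).1 * (q : ℚ) ^ (toAdd g).2 * ((toAdd x : Zr (p * q)) : ℚ) :=
  rfl

noncomputable def pScaleHom : Multiplicative ℤ →* MulAut (Multiplicative (Zr (p * q))) :=
  (scaleHom p q hp hq).comp (AddMonoidHom.inl ℤ ℤ).toMultiplicative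

theorem commute_pScaleHom_etaHom (k z : Multiplicative ℤ) :
    Commute (pScaleHom p q hp hq k) (etaHom p q hp hq z) :=
  (Commute.all _ _).map (scaleHom p q hp hq)

def shearEquiv : Multiplicative (ℤ × ℤ) ≃* Multiplicative ℤ × Multiplicative ℤ where
  toFun g := (ofAdd ((toAdd g).1 - (toAdd g).2), ofAdd (toAdd g).2)
  invFun h := ofAdd (toAdd h.1 + toAdd h.2, toAdd h.2)
  left_inv g := by simp
  right_inv h := by simp
  map_mul' g h := by ext <;> simp [add_sub_add_comm]

theorem scaleHom_eq_etaHom_mul_pScaleHom (g : Multiplicative (ℤ × ℤ)) :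
    scaleHom p q hp hq g =
      etaHom p q hp hq (shearEquiv g).2 * pScaleHom p q hp hq (shearEquiv g).1 := by
  rw [etaHom, pScaleHom, MonoidHom.comp_apply, MonoidHom.comp_apply, ← map_mul]
  congr 1
  ext <;> simp [shearEquiv]

end BaumslagSolitar

/-- `ℤ[1/pq] ⋊ ℤ²` is isomorphic, via `(x, m, n) ↦ ((x, n), m - n)`, to
`(ℤ[1/pq] ⋊_η ℤ) ⋊_γ ℤ`, where `η` is multiplication by `pq` and `γ` is the
`ℤ`-action `γ_k(x, z) = (p^k x, z)`. -/
theorem stmt_17 (p q : ℕ) (hp : 2 ≤ p) (hq : 2 ≤ q) :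
    ∃ γ : Multiplicative ℤ →*
        MulAut (Multiplicative (Zr (p * q)) ⋊[etaHom p q hp hq]
          Multiplicative ℤ),
      (∀ (k : ℤ) (b : Multiplicative (Zr (p * q)) ⋊[etaHom p q hp hq]
          Multiplicative ℤ),
        ((toAdd ((γ (ofAdd k)) b).left : Zr (p * q)) : ℚ)
            = (p : ℚ) ^ k * ((toAdd b.left : Zr (p * q)) : ℚ) ∧
          ((γ (ofAdd k)) b).right = b.right) ∧
      ∃ iso : (Multiplicative (Zr (p * q)) ⋊[scaleHom p q hp hq]
            Multiplicative (ℤ × ℤ)) ≃*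
          ((Multiplicative (Zr (p * q)) ⋊[etaHom p q hp hq]
            Multiplicative ℤ) ⋊[γ] Multiplicative ℤ),
        ∀ (x : Zr (p * q)) (m n : ℤ),
          iso ⟨ofAdd x, ofAdd (m, n)⟩ = ⟨⟨ofAdd x, ofAdd n⟩, ofAdd (m - n)⟩ := by
  have hγ := commute_pScaleHom_etaHom p q hp hq
  refine ⟨actOnLeft _ _ hγ, fun k b => ⟨?_, rfl⟩,
    equivActOnLeft _ _ hγ _ shearEquiv (scaleHom_eq_etaHom_mul_pScaleHom p q hp hq),
    fun x m n => rfl⟩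
  simp [pScaleHom, coe_toAdd_scaleHom_apply]
end
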